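/- Let A be a fixed real symmetric m×m matrix, and for w ∈ (0,∞)^m let W(w) = diag(√w_1,…,√w_m), A_W = W A W, and P(w, n̄) = (det(I − A_W²))^{1/2} · Haf(A_{n̄})² · ∏_i w_i^{n_i}/n_i! for n̄ ∈ ℕ^m. Let H : ℕ^m → ℝ be a function with finite support, and suppose at w⁰ ∈ (0,∞)^m the operator norm of A_{W(w⁰)} is strictly less than 1. Then the cost C(w) = Σ_{n̄ ∈ supp(H)} H(n̄) P(w, n̄) satisfies, for each k, ∂C/∂w_k at w⁰ equals Σ_{n̄ ∈ supp(H)} H(n̄) · ((n_k − ⟨n_k⟩)/w⁰_k) · P(w⁰, n̄), where ⟨n_k⟩ := (A_W²(I − A_W²)^{-1})_{kk} evaluated at w⁰. -/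

import Mathlib

open Finset Matrix
open scoped Matrix.Norms.L2Operator

open scoped Classical in
/-- The hafnian of a matrix: the sum over all perfect matchings of the index set
(encoded as fixed-point-free involutions `σ`), of the product of the entries
`A i (σ i)` over the pairs `{i, σ i}` (each pair taken once, via `i < σ i`).
For an empty index type this is `1`, and for an odd-cardinality index type it is `0`. -/
noncomputable def hafnian {ι : Type*} [Fintype ι] [LinearOrder ι] {R : Type*} [CommRing R]
    (A : Matrix ι ι R) : R :=
  ∑ σ ∈ Finset.univ.filter
      (fun σ : Equiv.Perm ι => σ * σ = 1 ∧ ∀ i, σ i ≠ i),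
    ∏ i ∈ Finset.univ.filter (fun i => i < σ i), A i (σ i)

/-- The index type for `A_n̄` (row/column `i` repeated `n i` times), ordered
lexicographically. -/
instance repIdxFintype {M : ℕ} (n : Fin M → ℕ) : Fintype (Σₗ i : Fin M, Fin (n i)) :=
  inferInstanceAs (Fintype ((i : Fin M) × Fin (n i)))

/-- `A_n̄`: the matrix obtained from the `M × M` matrix `A` by repeating row and column `i`
exactly `n i` times (deleting them when `n i = 0`).  Note that `hafnian (repMat A n) = 0`
automatically when `Σ n_i` is odd. -/
def repMat {M : ℕ} {R : Type*} (A : Matrix (Fin M) (Fin M) R) (n : Fin M → ℕ) :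
    Matrix (Σₗ i : Fin M, Fin (n i)) (Σₗ i : Fin M, Fin (n i)) R :=
  A.submatrix (fun p => (ofLex p).1) (fun p => (ofLex p).1)

/-- `A_W = W A W` with `W = diag(√w_1,…,√w_m)`. -/
noncomputable def WAW {m : ℕ} (A : Matrix (Fin m) (Fin m) ℝ) (w : Fin m → ℝ) :
    Matrix (Fin m) (Fin m) ℝ :=
  Matrix.diagonal (fun i => Real.sqrt (w i)) * A * Matrix.diagonal (fun i => Real.sqrt (w i))

/-- The GBS probability (WAW parametrization):
`P(w, n̄) = det(I − A_W²)^{1/2} · Haf(A_n̄)² · ∏_i w_i^{n_i}/n_i!`. -/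
noncomputable def Pgbs {m : ℕ} (A : Matrix (Fin m) (Fin m) ℝ) (n : Fin m → ℕ)
    (w : Fin m → ℝ) : ℝ :=
  Real.sqrt (1 - WAW A w ^ 2).det * hafnian (repMat A n) ^ 2 *
    ∏ i, w i ^ n i / (Nat.factorial (n i) : ℝ)

/-- `⟨n_k⟩ = (A_W² (I − A_W²)⁻¹)_{kk}`, the mean photon number in mode `k`. -/
noncomputable def navg {m : ℕ} (A : Matrix (Fin m) (Fin m) ℝ) (w : Fin m → ℝ)
    (k : Fin m) : ℝ :=
  (WAW A w ^ 2 * (1 - WAW A w ^ 2)⁻¹ : Matrix (Fin m) (Fin m) ℝ) k k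

/-!
The hafnian factor of `P(w, n̄)` does not depend on `w`, and the monomial `∏ w_i^{n_i}/n_i!`
has logarithmic derivative `n_k / w_k` in `w_k`. Changing only `w_k` turns `A_W` into `D A_W D`
with `D = 1 + (√(t / w_k) - 1) E_kk`, so `∂_k A_W = (E_kk A_W + A_W E_kk) / (2 w_k)`. By Jacobi's
formula, and because `(1 - A_W²)⁻¹` commutes with `A_W`, the logarithmic derivative of
`det(1 - A_W²)` is `-2 tr((1 - A_W²)⁻¹ A_W ∂_k A_W) = -2 ⟨n_k⟩ / w_k`. Finally `‖A_W‖ < 1` makes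
`1 - A_W²` positive definite, so the determinant is positive and its square root is
differentiable.
-/

section MatrixCalculus

variable {𝕜 : Type*} {n : Type*} [Fintype n] [DecidableEq n]

theorem HasDerivAt.matrix_apply [RCLike 𝕜] {F : 𝕜 → Matrix n n 𝕜} {F' : Matrix n n 𝕜} {x : 𝕜}
    (h : HasDerivAt F F' x) (i j : n) : HasDerivAt (fun t => F t i j) (F' i j) x :=
  (entryLinearMap 𝕜 𝕜 i j).toContinuousLinearMap.hasFDerivAt.comp_hasDerivAt x h

theorem hasDerivAt_det [NontriviallyNormedField 𝕜] {M : 𝕜 → Matrix n n 𝕜} {M' : Matrix n n 𝕜}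
    {x : 𝕜} (h : ∀ i j, HasDerivAt (fun t => M t i j) (M' i j) x) :
    HasDerivAt (fun t => (M t).det) ((M x).adjugate * M').trace x := by
  have hLeibniz : HasDerivAt (fun t => (M t).det)
      (∑ σ : Equiv.Perm n, ((Equiv.Perm.sign σ : ℤ) : 𝕜) *
        ∑ i, (∏ j ∈ univ.erase i, M x (σ j) j) * M' (σ i) i) x := by
    simp only [det_apply']
    refine HasDerivAt.fun_sum fun σ _ => ?_
    simpa [smul_eq_mul] using
      (HasDerivAt.fun_finsetProd (u := univ) fun i _ => h (σ i) i).const_mul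
        ((Equiv.Perm.sign σ : ℤ) : 𝕜)
  -- Cramer's rule: the `i`-th diagonal entry of `adj M * M'` is `det` of `M` with column `i`
  -- replaced by that of `M'`; expanding these determinants gives the Leibniz sum above.
  have hcol (i : n) : ((M x).updateCol i fun r => M' r i).det
      = ∑ σ : Equiv.Perm n, ((Equiv.Perm.sign σ : ℤ) : 𝕜) *
          ((∏ j ∈ univ.erase i, M x (σ j) j) * M' (σ i) i) := by
    rw [det_apply']
    refine sum_congr rfl fun σ _ => congrArg _ ?_
    rw [← mul_prod_erase univ _ (mem_univ i), mul_comm, updateCol_self]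
    congr 1
    exact prod_congr rfl fun j hj => updateCol_ne (mem_erase.mp hj).1
  have htrace : ((M x).adjugate * M').trace = ∑ i, ((M x).updateCol i fun r => M' r i).det := by
    simp only [← cramer_apply, cramer_eq_adjugate_mulVec]
    simp [trace, Matrix.diag, mul_apply, mulVec, dotProduct]
  convert hLeibniz using 1
  simp only [htrace, hcol, mul_sum]
  exact sum_comm

theorem Commute.matrix_inv_left {R : Type*} [CommRing R] {M B : Matrix n n R} (h : Commute M B) :
    Commute M⁻¹ B := by
  rw [nonsing_inv_eq_ringInverse]
  by_cases hM : IsUnit M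
  · obtain ⟨u, rfl⟩ := hM
    simpa only [Ring.inverse_unit] using h.units_inv_left
  · simp only [Ring.inverse_non_unit _ hM, Commute.zero_left]

theorem hasDerivAt_det_one_sub_sq [RCLike 𝕜] {B : 𝕜 → Matrix n n 𝕜} {B' : Matrix n n 𝕜} {x : 𝕜}
    (hB : HasDerivAt B B' x) (hdet : IsUnit (1 - B x ^ 2).det) :
    HasDerivAt (fun t => (1 - B t ^ 2).det)
      (-2 * (1 - B x ^ 2).det * ((1 - B x ^ 2)⁻¹ * B x * B').trace) x := by
  set M := 1 - B x ^ 2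
  have hM : HasDerivAt (fun t => 1 - B t ^ 2) (-(B' * B x + B x * B')) x := by
    simp only [sq]
    exact (hB.fun_mul hB).const_sub 1
  have hcomm : Commute M⁻¹ (B x) :=
    ((Commute.one_left _).sub_left ((Commute.refl _).pow_left 2)).matrix_inv_left
  have hadj : M.adjugate = M.det • M⁻¹ := by
    rw [Matrix.inv_def, smul_smul, Ring.mul_inverse_cancel _ hdet, one_smul]
  convert hasDerivAt_det fun i j => hM.matrix_apply i j using 1
  calc -2 * M.det * (M⁻¹ * B x * B').trace
      = -M.det * ((M⁻¹ * B x * B').trace + (B x * M⁻¹ * B').trace) := by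
        rw [hcomm.eq]; ring
    _ = -M.det * ((M⁻¹ * B' * B x).trace + (M⁻¹ * (B x * B')).trace) := by
        rw [trace_mul_cycle M⁻¹ B' (B x), Matrix.mul_assoc M⁻¹ (B x) B', add_comm]
    _ = (M.adjugate * -(B' * B x + B x * B')).trace := by
        rw [hadj, Matrix.mul_neg, trace_neg, smul_mul, trace_smul, Matrix.mul_add, trace_add,
          Matrix.mul_assoc, smul_eq_mul]; ring

end MatrixCalculus

section PosDef

open scoped ComplexOrder

variable {𝕜 : Type*} [RCLike 𝕜] {n : Type*} [Fintype n]

theorem star_dotProduct_self_eq_norm_sq (v : n → 𝕜) :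
    star v ⬝ᵥ v = ((‖WithLp.toLp 2 v‖ ^ 2 : ℝ) : 𝕜) := by
  rw [dotProduct_comm, ← EuclideanSpace.inner_toLp_toLp, inner_self_eq_norm_sq_to_K]
  push_cast; rfl

theorem posDef_one_sub_conjTranspose_mul_self_of_norm_lt_one [DecidableEq n] {B : Matrix n n 𝕜}
    (h : ‖B‖ < 1) :
    (1 - Bᴴ * B).PosDef := by
  refine posDef_iff_dotProduct_mulVec.mpr ⟨?_, fun x hx => ?_⟩
  · simp [IsHermitian, conjTranspose_sub]
  have hquad : star x ⬝ᵥ ((1 - Bᴴ * B) *ᵥ x)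
      = ((‖WithLp.toLp 2 x‖ ^ 2 - ‖WithLp.toLp 2 (B *ᵥ x)‖ ^ 2 : ℝ) : 𝕜) := by
    rw [sub_mulVec, one_mulVec, dotProduct_sub, ← mulVec_mulVec, dotProduct_mulVec,
      ← star_mulVec, star_dotProduct_self_eq_norm_sq, star_dotProduct_self_eq_norm_sq]
    push_cast; rfl
  have hx' : 0 < ‖WithLp.toLp 2 x‖ := norm_pos_iff.mpr (by simpa using hx)
  have hBx : ‖WithLp.toLp 2 (B *ᵥ x)‖ < ‖WithLp.toLp 2 x‖ :=
    (l2_opNorm_mulVec B (WithLp.toLp 2 x)).trans_lt (mul_lt_of_lt_one_left hx' h)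
  rw [hquad, RCLike.ofReal_pos]
  nlinarith [norm_nonneg (WithLp.toLp 2 (B *ᵥ x))]

end PosDef

section Monomial

variable {𝕜 : Type*} [NontriviallyNormedField 𝕜]

theorem hasDerivAt_pow_div_factorial {x : 𝕜} (hx : x ≠ 0) (n : ℕ) :
    HasDerivAt (fun t => t ^ n / (n.factorial : 𝕜)) (n / x * (x ^ n / n.factorial)) x := by
  refine ((hasDerivAt_pow n x).div_const _).congr_deriv ?_
  cases n with
  | zero => simp
  | succ n => rw [Nat.add_sub_cancel]; field_simp; ring

theorem HasDerivAt.prod_update {ι : Type*} [Fintype ι] [DecidableEq ι] {g : ι → 𝕜 → 𝕜}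
    {w : ι → 𝕜} {k : ι} {c : 𝕜} (hg : HasDerivAt (g k) (c * g k (w k)) (w k)) :
    HasDerivAt (fun t => ∏ i, g i (Function.update w k t i)) (c * ∏ i, g i (w i)) (w k) := by
  have hsplit (t : 𝕜) :
      ∏ i, g i (Function.update w k t i) = g k t * ∏ i ∈ univ.erase k, g i (w i) := by
    rw [← mul_prod_erase univ _ (mem_univ k), Function.update_self]
    congr 1
    exact prod_congr rfl fun i hi => by rw [Function.update_of_ne (mem_erase.mp hi).1]
  rw [funext hsplit, ← mul_prod_erase univ _ (mem_univ k), ← mul_assoc]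
  exact hg.mul_const _

end Monomial

section WAW

variable {m : ℕ} {A : Matrix (Fin m) (Fin m) ℝ}

theorem isSymm_WAW (hA : A.IsSymm) (w : Fin m → ℝ) : (WAW A w).IsSymm := by
  rw [IsSymm, WAW, transpose_mul, transpose_mul, diagonal_transpose, hA.eq, Matrix.mul_assoc]

theorem WAW_update {w : Fin m → ℝ} {k : Fin m} (hw : 0 < w k) (t : ℝ) :
    WAW A (Function.update w k t) =
      (1 + (√t / √(w k) - 1) • single k k 1) * WAW A w *
        (1 + (√t / √(w k) - 1) • single k k 1) := by
  set d : Fin m → ℝ := 1 + Pi.single k (√t / √(w k) - 1)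
  have hD : 1 + (√t / √(w k) - 1) • single k k (1 : ℝ) = diagonal d := by
    rw [smul_single, smul_eq_mul, mul_one, ← diagonal_single, ← diagonal_one, diagonal_add]
    rfl
  have hS : (fun i => √(Function.update w k t i)) = fun i => d i * √(w i) := by
    ext i
    rcases eq_or_ne i k with rfl | hik
    · simp only [d, Function.update_self, Pi.add_apply, Pi.one_apply, Pi.single_eq_same,
        add_sub_cancel]
      field_simp [(Real.sqrt_pos.mpr hw).ne']
    · simp [d, hik]
  rw [hD, WAW, WAW, hS, ← diagonal_mul_diagonal]
  simp only [Matrix.mul_assoc]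
  rw [(commute_diagonal d _).eq]

theorem hasDerivAt_WAW_update {w : Fin m → ℝ} {k : Fin m} (hw : 0 < w k) :
    HasDerivAt (fun t => WAW A (Function.update w k t))
      ((2 * w k)⁻¹ • (single k k 1 * WAW A w + WAW A w * single k k 1)) (w k) := by
  set E : Matrix (Fin m) (Fin m) ℝ := single k k 1
  have hsqrt : √(w k) ≠ 0 := (Real.sqrt_pos.mpr hw).ne'
  have hs : HasDerivAt (fun t => √t / √(w k) - 1) (2 * w k)⁻¹ (w k) := by
    refine (((Real.hasDerivAt_sqrt hw.ne').div_const (√(w k))).sub_const 1).congr_deriv ?_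
    rw [div_div, mul_assoc, Real.mul_self_sqrt hw.le, one_div]
  have hD : HasDerivAt (fun t => 1 + (√t / √(w k) - 1) • E) ((2 * w k)⁻¹ • E) (w k) :=
    (hs.smul_const E).const_add 1
  have hD1 : 1 + (√(w k) / √(w k) - 1) • E = 1 := by simp [div_self hsqrt]
  rw [funext (WAW_update hw)]
  refine ((hD.fun_mul (hasDerivAt_const (w k) (WAW A w))).fun_mul hD).congr_deriv ?_
  rw [hD1, smul_add, Matrix.mul_zero, add_zero, Matrix.mul_one, Matrix.one_mul, smul_mul,
    Matrix.mul_smul]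

theorem hasDerivAt_sqrt_det_one_sub_WAW_sq (hA : A.IsSymm) {w : Fin m → ℝ} {k : Fin m}
    (hw : 0 < w k) (hnorm : ‖WAW A w‖ < 1) :
    HasDerivAt (fun t => √(1 - WAW A (Function.update w k t) ^ 2).det)
      (-(navg A w k / w k) * √(1 - WAW A w ^ 2).det) (w k) := by
  set B := WAW A w
  set M := 1 - B ^ 2
  set E : Matrix (Fin m) (Fin m) ℝ := single k k 1
  have hpos : 0 < M.det := by
    have := posDef_one_sub_conjTranspose_mul_self_of_norm_lt_one hnorm
    rw [conjTranspose_eq_transpose_of_trivial, (isSymm_WAW hA w).eq, ← sq] at this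
    exact this.det_pos
  have hcomm : Commute M⁻¹ B :=
    ((Commute.one_left B).sub_left ((Commute.refl B).pow_left 2)).matrix_inv_left
  have htrace : (M⁻¹ * B * ((2 * w k)⁻¹ • (E * B + B * E))).trace = navg A w k / w k := by
    have hE (X : Matrix (Fin m) (Fin m) ℝ) : (X * E).trace = X k k := by
      simp [E, trace_mul_single]
    have h1 : B * M⁻¹ * B = B ^ 2 * M⁻¹ := by
      rw [Matrix.mul_assoc, hcomm.eq, ← Matrix.mul_assoc, sq]
    have h2 : M⁻¹ * B * B = B ^ 2 * M⁻¹ := by rw [hcomm.eq, h1]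
    calc (M⁻¹ * B * (2 * w k)⁻¹ • (E * B + B * E)).trace
        = (2 * w k)⁻¹ * ((B * M⁻¹ * B * E).trace + (M⁻¹ * B * B * E).trace) := by
          rw [Matrix.mul_smul, trace_smul, smul_eq_mul, Matrix.mul_add, trace_add,
            ← Matrix.mul_assoc, trace_mul_comm _ B]
          simp only [Matrix.mul_assoc]
      _ = navg A w k / w k := by
          rw [hE, hE, h1, h2, navg]
          ring
  have hdet := hasDerivAt_det_one_sub_sq (hasDerivAt_WAW_update hw)
    (by simpa only [Function.update_eq_self] using hpos.ne'.isUnit)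
  simp only [Function.update_eq_self] at hdet
  refine (hdet.sqrt (by simpa only [Function.update_eq_self] using hpos.ne')).congr_deriv ?_
  have hsqrt : 0 < √M.det := Real.sqrt_pos.mpr hpos
  rw [htrace, Function.update_eq_self]
  field_simp
  change -(M.det * navg A w k / √M.det) = -(navg A w k * √M.det)
  rw [neg_inj, div_eq_iff hsqrt.ne', mul_assoc, Real.mul_self_sqrt hpos.le, mul_comm]

theorem hasDerivAt_Pgbs_update (hA : A.IsSymm) (n : Fin m → ℕ) {w : Fin m → ℝ} {k : Fin m}
    (hw : 0 < w k) (hnorm : ‖WAW A w‖ < 1) :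
    HasDerivAt (fun t => Pgbs A n (Function.update w k t))
      (((n k - navg A w k) / w k) * Pgbs A n w) (w k) := by
  have hmonomial := HasDerivAt.prod_update (g := fun i t => t ^ n i / ((n i).factorial : ℝ))
    (hasDerivAt_pow_div_factorial hw.ne' (n k))
  refine (((hasDerivAt_sqrt_det_one_sub_WAW_sq hA hw hnorm).mul_const
    (hafnian (repMat A n) ^ 2)).mul hmonomial).congr_deriv ?_
  simp only [Pgbs, Function.update_eq_self]
  ring

end WAW

/-- for a finitely supported cost function `H : ℕ^m → ℝ`, the stochastic-
optimization cost `C(w) = Σ_{n̄ ∈ supp H} H(n̄) P(w, n̄)` in the WAW parametrization, with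
`w⁰ ∈ (0,∞)^m` and `‖A_{W(w⁰)}‖ < 1` (L2 operator norm), has partial derivative
`∂C/∂w_k = Σ_{n̄ ∈ supp H} H(n̄) · ((n_k − ⟨n_k⟩)/w⁰_k) · P(w⁰, n̄)` at `w⁰`. -/
theorem hasDerivAt_cost_weight {m : ℕ} (A : Matrix (Fin m) (Fin m) ℝ) (hA : A.IsSymm)
    (H : (Fin m → ℕ) → ℝ) (hH : (Function.support H).Finite)
    (w0 : Fin m → ℝ) (hw0 : ∀ i, 0 < w0 i) (hnorm : ‖WAW A w0‖ < 1) (k : Fin m) :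
    HasDerivAt (fun t => ∑ n ∈ hH.toFinset, H n * Pgbs A n (Function.update w0 k t))
      (∑ n ∈ hH.toFinset, H n * ((((n k : ℝ) - navg A w0 k) / w0 k) * Pgbs A n w0))
      (w0 k) :=
  HasDerivAt.fun_sum fun n _ => (hasDerivAt_Pgbs_update hA n (hw0 k) hnorm).const_mul (H n)
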